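/- arXiv:1909.08651 — 13 statements merged into one kernel-verified Lean document; each statement's English description precedes it below -/
import Mathlib

section
/- Let K ≥ 1, let q : Fin K → ℝ≥0 be power splits, w : Fin K → ℝ≥0 with w indexed so user j has interference-plus-noise w_j, and define c_j = log(1 + q_j / (∑_{h<j} q_h + w_j)) (natural log), assuming all denominators are positive. Then, with the convention w_0' = 0 where w'_t = w_t shifted, the total power satisfies ∑_{j} q_j = ∑_{t=1}^{K} (w_t - w_{t-1}) · e^{∑_{k=t}^{K} c_k} - w_K, where w_0 := 0. -/
/-!
Writing `Q n = q 1 + ⋯ + q n`, the definition of `c j` says exactly that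
`Q j + w j = (Q (j - 1) + w j) · e^{c j}`. Hence `x n = Q n + w n` solves the linear recurrence
`x (n + 1) = (x n + (w (n + 1) - w n)) · e^{c (n + 1)}` with `x 0 = w 0 = 0`, and unrolling it
gives `x K` as the sum in the statement.
-/

open Finset

theorem eq_sum_mul_prod_Icc_of_recurrence {R : Type*} [CommSemiring R] (x d r : ℕ → R)
    (hx0 : x 0 = 0) (N : ℕ) (hrec : ∀ n < N, x (n + 1) = (x n + d (n + 1)) * r (n + 1)) :
    x N = ∑ t ∈ Icc 1 N, d t * ∏ k ∈ Icc t N, r k := by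
  induction N with
  | zero => simp [hx0]
  | succ N ih =>
    have hprod : ∀ t ∈ Icc 1 N, d t * ∏ k ∈ Icc t (N + 1), r k
        = d t * (∏ k ∈ Icc t N, r k) * r (N + 1) := by
      intro t ht
      rw [prod_Icc_succ_top (by grind), mul_assoc]
    rw [hrec N N.lt_succ_self, ih fun n hn => hrec n (by omega),
      sum_Icc_succ_top (by omega), sum_congr rfl hprod, ← sum_mul, Icc_self, prod_singleton,
      add_mul]

theorem mul_exp_log_one_add_div {D q : ℝ} (hD : 0 < D) (hq : 0 ≤ q) :
    D * Real.exp (Real.log (1 + q / D)) = D + q := by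
  rw [Real.exp_log (by positivity)]
  field_simp

theorem stmt1_general (K : ℕ) (q w c : ℕ → ℝ)
    (hq : ∀ j ∈ Finset.Icc 1 K, 0 ≤ q j)
    (hw0 : w 0 = 0)
    (hden : ∀ j ∈ Finset.Icc 1 K, 0 < (∑ h ∈ Finset.Icc 1 (j - 1), q h) + w j)
    (hc : ∀ j ∈ Finset.Icc 1 K,
      c j = Real.log (1 + q j / ((∑ h ∈ Finset.Icc 1 (j - 1), q h) + w j))) :
    ∑ j ∈ Finset.Icc 1 K, q j =
      (∑ t ∈ Finset.Icc 1 K, (w t - w (t - 1)) * Real.exp (∑ k ∈ Finset.Icc t K, c k)) - w K := by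
  have hrec : ∀ n < K, (∑ h ∈ Icc 1 (n + 1), q h) + w (n + 1)
      = ((∑ h ∈ Icc 1 n, q h) + w n + (w (n + 1) - w (n + 1 - 1))) * Real.exp (c (n + 1)) := by
    intro n hn
    have hj : n + 1 ∈ Icc 1 K := mem_Icc.mpr ⟨by omega, hn⟩
    have hstep := mul_exp_log_one_add_div (hden _ hj) (hq _ hj)
    rw [← hc _ hj, Nat.add_sub_cancel] at hstep
    rw [Nat.add_sub_cancel, sum_Icc_succ_top (by omega)]
    linear_combination -hstep
  have hsol := eq_sum_mul_prod_Icc_of_recurrence (fun n => (∑ h ∈ Icc 1 n, q h) + w n)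
    (fun t => w t - w (t - 1)) (fun k => Real.exp (c k)) (by simp [hw0]) K hrec
  simp only [← Real.exp_sum] at hsol
  linarith

theorem stmt1 (K : ℕ) (hK : 1 ≤ K) (q w c : ℕ → ℝ)
    (hq : ∀ j ∈ Finset.Icc 1 K, 0 ≤ q j)
    (hw0 : w 0 = 0) (hw : ∀ j ∈ Finset.Icc 1 K, 0 ≤ w j)
    (hden : ∀ j ∈ Finset.Icc 1 K, 0 < (∑ h ∈ Finset.Icc 1 (j - 1), q h) + w j)
    (hc : ∀ j ∈ Finset.Icc 1 K,
      c j = Real.log (1 + q j / ((∑ h ∈ Finset.Icc 1 (j - 1), q h) + w j))) :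
    ∑ j ∈ Finset.Icc 1 K, q j =
      (∑ t ∈ Finset.Icc 1 K, (w t - w (t - 1)) * Real.exp (∑ k ∈ Finset.Icc t K, c k)) - w K :=
  stmt1_general K q w c hq hw0 hden hc
end

section
/- Fix K ≥ 2, rates c : Fin K → ℝ with c_j ≥ 0 for all j, and interference values w : Fin K → ℝ≥0. For a permutation order of the users, define R(c, w-order) = ∑_{t=1}^{K} (w_{σ(t)} - w_{σ(t-1)}) e^{∑_{k=t}^{K} c_{σ(k)}} - w_{σ(K)} (with w_{σ(0)} := 0), i.e., the total power required under decoding order σ. If two adjacent positions ℓ, ℓ+1 in the order satisfy w_ℓ > w_{ℓ+1} (the user placed earlier has strictly larger w), then swapping these two users yields R' ≤ R; specifically R' − R = (w_{ℓ+1} − w_ℓ) e^{∑_{k=ℓ+2}^{K} c_k} (e^{c_ℓ} − 1)(e^{c_{ℓ+1}} − 1) ≤ 0. -/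
/-!
Summation by parts rewrites `R` as `∑ₜ wₜ (Eₜ - Eₜ₊₁) - w₀ E₁` with `Eₜ = exp (∑_{k ≥ t} c_k)`.
Swapping users `ℓ, ℓ + 1` leaves every tail sum except `E_{ℓ+1}` unchanged, so only the
summands `t = ℓ, ℓ + 1` change; writing `E_ℓ = e^{c_ℓ} e^{c_{ℓ+1}} E_{ℓ+2}`, the difference
factors as `(w_{ℓ+1} - w_ℓ) E_{ℓ+2} (e^{c_ℓ} - 1)(e^{c_{ℓ+1}} - 1)`, where every factor but
the first is nonnegative.
-/
/-- Total power required on one resource unit to deliver rate vector `c` (users indexed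
`1,…,K` in decoding order, `w 0 = 0` by convention). -/
noncomputable def Rtot (K : ℕ) (w c : ℕ → ℝ) : ℝ :=
  (∑ t ∈ Finset.Icc 1 K, (w t - w (t - 1)) * Real.exp (∑ k ∈ Finset.Icc t K, c k)) - w K

open Finset Equiv

theorem Finset.sum_comp_swap_of_mem {M ι : Type*} [AddCommMonoid M] [DecidableEq ι]
    {s : Finset ι} {a b : ι} (ha : a ∈ s) (hb : b ∈ s) (f : ι → M) :
    ∑ x ∈ s, f (swap a b x) = ∑ x ∈ s, f x := by
  refine sum_equiv (swap a b) (fun x => ?_) (fun _ _ => rfl)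
  rcases eq_or_ne x a with rfl | hxa
  · simp [ha, hb]
  rcases eq_or_ne x b with rfl | hxb
  · simp [ha, hb]
  · rw [swap_apply_of_ne_of_ne hxa hxb]

theorem sum_Icc_by_parts {R : Type*} [CommRing R] (w f : ℕ → R) (K : ℕ) :
    ∑ t ∈ Icc 1 K, (w t - w (t - 1)) * f t - w K * f (K + 1) =
      ∑ t ∈ Icc 1 K, w t * (f t - f (t + 1)) - w 0 * f 1 := by
  induction K with
  | zero => simp
  | succ K ih =>
    rw [sum_Icc_succ_top (by omega), sum_Icc_succ_top (by omega)]
    simp only [add_tsub_cancel_right]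
    linear_combination ih

noncomputable def expTail (K : ℕ) (c : ℕ → ℝ) (t : ℕ) : ℝ :=
  Real.exp (∑ k ∈ Icc t K, c k)

theorem expTail_of_lt {K t : ℕ} (c : ℕ → ℝ) (h : K < t) : expTail K c t = 1 := by
  simp [expTail, Icc_eq_empty_of_lt h]

theorem expTail_eq_exp_mul {K t : ℕ} (c : ℕ → ℝ) (h : t ≤ K) :
    expTail K c t = Real.exp (c t) * expTail K c (t + 1) := by
  rw [expTail, expTail, ← Real.exp_add, Icc_eq_cons_Ioc h, sum_cons, ← Icc_add_one_left_eq_Ioc]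

theorem Rtot_eq_sum_sub (K : ℕ) (w c : ℕ → ℝ) :
    Rtot K w c = ∑ t ∈ Icc 1 K, w t * (expTail K c t - expTail K c (t + 1))
      - w 0 * expTail K c 1 := by
  rw [← sum_Icc_by_parts, expTail_of_lt c (Nat.lt_succ_self K), mul_one]
  rfl

theorem expTail_comp_swap {K ℓ t : ℕ} (c : ℕ → ℝ) (hℓK : ℓ + 1 ≤ K) (ht : t ≠ ℓ + 1) :
    expTail K (c ∘ swap ℓ (ℓ + 1)) t = expTail K c t := by
  unfold expTail
  congr 1
  rcases le_or_gt t ℓ with h | h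
  · exact sum_comp_swap_of_mem (by rw [mem_Icc]; omega) (by rw [mem_Icc]; omega) c
  · refine sum_congr rfl fun k hk => ?_
    rw [mem_Icc] at hk
    rw [Function.comp_apply, swap_apply_of_ne_of_ne (by omega) (by omega)]

theorem Rtot_comp_swap_sub {K ℓ : ℕ} (w c : ℕ → ℝ) (hℓ1 : 1 ≤ ℓ) (hℓK : ℓ + 1 ≤ K) :
    Rtot K (w ∘ swap ℓ (ℓ + 1)) (c ∘ swap ℓ (ℓ + 1)) - Rtot K w c =
      (w (ℓ + 1) - w ℓ) * Real.exp (∑ k ∈ Icc (ℓ + 2) K, c k) *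
        ((Real.exp (c ℓ) - 1) * (Real.exp (c (ℓ + 1)) - 1)) := by
  set σ := swap ℓ (ℓ + 1)
  have hE : ∀ t ≠ ℓ + 1, expTail K (c ∘ σ) t = expTail K c t := fun t =>
    expTail_comp_swap c hℓK
  have hw : ∀ t ≠ ℓ, t ≠ ℓ + 1 → (w ∘ σ) t = w t := fun t ht₁ ht₂ =>
    congrArg w (swap_apply_of_ne_of_ne ht₁ ht₂)
  have hpair : ({ℓ, ℓ + 1} : Finset ℕ) ⊆ Icc 1 K := by
    intro x hx
    simp only [mem_insert, mem_singleton] at hx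
    rcases hx with rfl | rfl <;> rw [mem_Icc] <;> omega
  rw [Rtot_eq_sum_sub, Rtot_eq_sum_sub, hw 0 (by omega) (by omega), hE 1 (by omega),
    sub_sub_sub_cancel_right, ← sum_sub_distrib, ← sum_subset hpair, sum_pair (by omega)]
  · have hσEℓ2 : expTail K (c ∘ σ) (ℓ + 1 + 1) = expTail K c (ℓ + 1 + 1) := hE _ (by omega)
    have hEℓ1 : expTail K c (ℓ + 1) = Real.exp (c (ℓ + 1)) * expTail K c (ℓ + 1 + 1) :=
      expTail_eq_exp_mul c hℓK
    have hσEℓ1 : expTail K (c ∘ σ) (ℓ + 1) = Real.exp (c ℓ) * expTail K c (ℓ + 1 + 1) := by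
      rw [expTail_eq_exp_mul _ hℓK, hσEℓ2, Function.comp_apply, swap_apply_right]
    have hEℓ : expTail K c ℓ = Real.exp (c ℓ) * expTail K c (ℓ + 1) :=
      expTail_eq_exp_mul c (by omega)
    show _ = (w (ℓ + 1) - w ℓ) * expTail K c (ℓ + 1 + 1) * _
    rw [hE ℓ (by omega), hEℓ, hσEℓ1, hEℓ1, hσEℓ2, Function.comp_apply, Function.comp_apply,
      swap_apply_left, swap_apply_right]
    ring
  · intro t _ ht
    simp only [mem_insert, mem_singleton, not_or] at ht
    rw [hw t ht.1 ht.2, hE t ht.2, hE (t + 1) (by omega), sub_self]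

theorem stmt2_general (K : ℕ) (c w : ℕ → ℝ)
    (hc : ∀ j ∈ Finset.Icc 1 K, 0 ≤ c j)
    (ℓ : ℕ) (hℓ1 : 1 ≤ ℓ) (hℓK : ℓ + 1 ≤ K) (hswap : w (ℓ + 1) < w ℓ) :
    Rtot K (w ∘ Equiv.swap ℓ (ℓ + 1)) (c ∘ Equiv.swap ℓ (ℓ + 1)) - Rtot K w c =
      (w (ℓ + 1) - w ℓ) * Real.exp (∑ k ∈ Finset.Icc (ℓ + 2) K, c k) *
        ((Real.exp (c ℓ) - 1) * (Real.exp (c (ℓ + 1)) - 1)) ∧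
    Rtot K (w ∘ Equiv.swap ℓ (ℓ + 1)) (c ∘ Equiv.swap ℓ (ℓ + 1)) ≤ Rtot K w c := by
  have hdiff := Rtot_comp_swap_sub w c hℓ1 hℓK
  have hexp : ∀ j ∈ Icc 1 K, 0 ≤ Real.exp (c j) - 1 := fun j hj =>
    sub_nonneg.2 (Real.one_le_exp (hc j hj))
  have hnonpos : (w (ℓ + 1) - w ℓ) * Real.exp (∑ k ∈ Icc (ℓ + 2) K, c k) *
      ((Real.exp (c ℓ) - 1) * (Real.exp (c (ℓ + 1)) - 1)) ≤ 0 :=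
    mul_nonpos_of_nonpos_of_nonneg
      (mul_nonpos_of_nonpos_of_nonneg (by linarith) (Real.exp_pos _).le)
      (mul_nonneg (hexp ℓ (by rw [mem_Icc]; omega)) (hexp (ℓ + 1) (by rw [mem_Icc]; omega)))
  exact ⟨hdiff, sub_nonpos.1 (hdiff ▸ hnonpos)⟩

theorem stmt2 (K : ℕ) (hK : 2 ≤ K) (c w : ℕ → ℝ)
    (hc : ∀ j ∈ Finset.Icc 1 K, 0 ≤ c j)
    (hw0 : w 0 = 0) (hw : ∀ j, 0 ≤ w j)
    (ℓ : ℕ) (hℓ1 : 1 ≤ ℓ) (hℓK : ℓ + 1 ≤ K) (hswap : w (ℓ + 1) < w ℓ) :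
    Rtot K (w ∘ Equiv.swap ℓ (ℓ + 1)) (c ∘ Equiv.swap ℓ (ℓ + 1)) - Rtot K w c =
      (w (ℓ + 1) - w ℓ) * Real.exp (∑ k ∈ Finset.Icc (ℓ + 2) K, c k) *
        ((Real.exp (c ℓ) - 1) * (Real.exp (c (ℓ + 1)) - 1)) ∧
    Rtot K (w ∘ Equiv.swap ℓ (ℓ + 1)) (c ∘ Equiv.swap ℓ (ℓ + 1)) ≤ Rtot K w c :=
  stmt2_general K c w hc ℓ hℓ1 hℓK hswap
end

section
/- Let K ≥ 2, c : Fin K → ℝ≥0, and w : Fin K → ℝ≥0. For each permutation σ of the K users define R_σ(c) = ∑_{t=1}^{K} (w_{σ(t)} − w_{σ(t−1)}) e^{∑_{k=t}^{K} c_{σ(k)}} − w_{σ(K)} with w_{σ(0)} := 0. Let σ* be a permutation ordering users in nondecreasing order of w. Then for every permutation σ and every c ≥ 0, R_{σ*}(c) ≤ R_σ(c); consequently {c ≥ 0 : R_σ(c) ≤ p} ⊆ {c ≥ 0 : R_{σ*}(c) ≤ p} for any power budget p. -/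
/-!
Listing the users in decoding order as pairs `(w_j, x_j)` with `x_j = exp c_j ≥ 1`, summation by
parts turns `R_σ(c) + w_{σ 0} ∏ x_j` into `∑_t w_{σ t} (x_{σ t} - 1) ∏_{k > t} x_{σ k}`.
Exchanging two adjacent users `a, b` (followed by users with product `Q`) changes this by
`(w_a - w_b) (x_a - 1) (x_b - 1) Q`, so moving a user with smaller `w` earlier never increases the
cost; an insertion-sort induction then shows that the order sorted by `w` is optimal.
-/

/-- Total power required under decoding order `σ` (a bijection of the user set `{1,…,K}`
with the convention `σ 0 = 0` and `w 0 = 0`). -/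
noncomputable def RPerm (K : ℕ) (w c : ℕ → ℝ) (σ : ℕ → ℕ) : ℝ :=
  (∑ t ∈ Finset.Icc 1 K,
      (w (σ t) - w (σ (t - 1))) * Real.exp (∑ k ∈ Finset.Icc t K, c (σ k))) - w (σ K)

open Finset

theorem List.prod_map_range' {M : Type*} [CommMonoid M] (g : ℕ → M) (m n : ℕ) :
    ((List.range' m n).map g).prod = ∏ k ∈ Finset.Ico m (m + n), g k := by
  rw [prod_eq_multiset_prod, Nat.Ico_eq_range']
  simp

theorem List.perm_map_of_bijOn {α β : Type*} {l : List α} (hl : l.Nodup) {s : Set β}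
    {f g : α → β} (hf : Set.BijOn f {a | a ∈ l} s) (hg : Set.BijOn g {a | a ∈ l} s) :
    (l.map f).Perm (l.map g) := by
  rw [List.perm_ext_iff_of_nodup (hl.map_on fun _ hx _ hy => hf.injOn hx hy)
    (hl.map_on fun _ hx _ hy => hg.injOn hx hy)]
  intro b
  have hfb := Set.ext_iff.1 hf.image_eq b
  have hgb := Set.ext_iff.1 hg.image_eq b
  simp only [Set.mem_image, Set.mem_ofPred_eq] at hfb hgb
  rw [List.mem_map, List.mem_map, hfb, hgb]

theorem Finset.sum_Ico_sub_mul_eq_sum_mul_sub {R : Type*} [CommRing R] (a E : ℕ → R) (K : ℕ) :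
    ∑ t ∈ Ico 1 (K + 1), (a t - a (t - 1)) * E t =
      ∑ t ∈ Ico 1 (K + 1), a t * (E t - E (t + 1)) + a K * E (K + 1) - a 0 * E 1 := by
  induction K with
  | zero => simp
  | succ K ih =>
    simp only [sum_Ico_succ_top (show 1 ≤ K + 1 by omega), ih, Nat.add_sub_cancel]
    ring

section DecodingCost

variable {R : Type*} [CommRing R]

def decodingCost : List (R × R) → R
  | [] => 0
  | p :: l => p.1 * (p.2 - 1) * (l.map Prod.snd).prod + decodingCost l

lemma decodingCost_map_range' (f : ℕ → R × R) (m n : ℕ) :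
    decodingCost ((List.range' m n).map f) =
      ∑ t ∈ Ico m (m + n), (f t).1 * ((f t).2 - 1) * ∏ k ∈ Ico (t + 1) (m + n), (f k).2 := by
  induction n generalizing m with
  | zero => simp [decodingCost]
  | succ n ih =>
    rw [List.range'_succ, List.map_cons, decodingCost, ih, List.map_map, List.prod_map_range',
      sum_eq_sum_Ico_succ_bot (by omega : m < m + (n + 1)), Nat.add_right_comm m 1 n, add_assoc]
    rfl

variable [PartialOrder R] [IsOrderedRing R]

lemma decodingCost_cons_le_cons (p : R × R) {l l' : List (R × R)} (hperm : l.Perm l')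
    (hle : decodingCost l ≤ decodingCost l') :
    decodingCost (p :: l) ≤ decodingCost (p :: l') := by
  simp only [decodingCost, (hperm.map Prod.snd).prod_eq]
  exact add_le_add_right hle _

lemma decodingCost_swap_le {p q : R × R} {l : List (R × R)} (hp : 1 ≤ p.2) (hq : 1 ≤ q.2)
    (hl : ∀ r ∈ l, 1 ≤ r.2) (hpq : p.1 ≤ q.1) :
    decodingCost (p :: q :: l) ≤ decodingCost (q :: p :: l) := by
  have hprod : 0 ≤ (l.map Prod.snd).prod := List.prod_nonneg fun x hx => by
    obtain ⟨r, hr, rfl⟩ := List.mem_map.1 hx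
    exact zero_le_one.trans (hl r hr)
  have hdiff : decodingCost (q :: p :: l) - decodingCost (p :: q :: l) =
      (q.1 - p.1) * (p.2 - 1) * (q.2 - 1) * (l.map Prod.snd).prod := by
    simp only [decodingCost, List.map_cons, List.prod_cons]
    ring
  have := sub_nonneg.2 hp
  have := sub_nonneg.2 hq
  have := sub_nonneg.2 hpq
  rw [← sub_nonneg, hdiff]
  positivity

lemma decodingCost_cons_le_append_cons {p : R × R} {a : List (R × R)} (hp : 1 ≤ p.2)
    (ha : ∀ r ∈ a, 1 ≤ r.2) :
    ∀ b : List (R × R), (∀ q ∈ b, p.1 ≤ q.1 ∧ 1 ≤ q.2) →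
      decodingCost (p :: (b ++ a)) ≤ decodingCost (b ++ p :: a)
  | [], _ => le_rfl
  | q :: b, hb => by
    have hq := hb q List.mem_cons_self
    have hba : ∀ r ∈ b ++ a, 1 ≤ r.2 := by
      intro r hr
      rcases List.mem_append.1 hr with h | h
      · exact (hb r (List.mem_cons_of_mem _ h)).2
      · exact ha r h
    calc decodingCost (p :: q :: (b ++ a))
        ≤ decodingCost (q :: p :: (b ++ a)) := decodingCost_swap_le hp hq.2 hba hq.1
      _ ≤ decodingCost (q :: (b ++ p :: a)) :=
        decodingCost_cons_le_cons q List.perm_middle.symm <|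
          decodingCost_cons_le_append_cons hp ha b fun r hr => hb r (List.mem_cons_of_mem _ hr)

theorem decodingCost_le_of_perm_of_pairwise :
    ∀ {l l' : List (R × R)}, l.Perm l' → l.Pairwise (fun p q => p.1 ≤ q.1) →
      (∀ p ∈ l', 1 ≤ p.2) → decodingCost l ≤ decodingCost l'
  | [], _, h, _, _ => by rw [h.nil_eq]
  | p :: l, _, h, hsort, hl' => by
    obtain ⟨b, a, rfl⟩ := List.append_of_mem (h.subset List.mem_cons_self)
    have hperm : l.Perm (b ++ a) := (h.trans List.perm_middle).cons_inv
    have hba : ∀ r ∈ b ++ a, 1 ≤ r.2 := fun r hr =>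
      hl' r (List.perm_middle.symm.subset (List.mem_cons_of_mem _ hr))
    rw [List.pairwise_cons] at hsort
    calc decodingCost (p :: l)
        ≤ decodingCost (p :: (b ++ a)) :=
          decodingCost_cons_le_cons p hperm <|
            decodingCost_le_of_perm_of_pairwise hperm hsort.2 hba
      _ ≤ decodingCost (b ++ p :: a) :=
          decodingCost_cons_le_append_cons (hl' p (by simp)) (fun r hr => hba r (by simp [hr])) b
            fun q hq => ⟨hsort.1 q (hperm.symm.subset (by simp [hq])), hba q (by simp [hq])⟩

end DecodingCost

noncomputable def decodingList (K : ℕ) (w c : ℕ → ℝ) (σ : ℕ → ℕ) : List (ℝ × ℝ) :=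
  ((List.range' 1 K).map σ).map fun j => (w j, Real.exp (c j))

lemma decodingList_perm_of_bijOn {K : ℕ} (w c : ℕ → ℝ) {σ τ : ℕ → ℕ}
    (hσ : Set.BijOn σ (Set.Icc 1 K) (Set.Icc 1 K)) (hτ : Set.BijOn τ (Set.Icc 1 K) (Set.Icc 1 K)) :
    (decodingList K w c σ).Perm (decodingList K w c τ) := by
  have hIcc : Set.Icc 1 K = {t | t ∈ List.range' 1 K} := by
    ext t
    simp only [Set.mem_Icc, Set.mem_ofPred_eq, List.mem_range'_1]
    omega
  rw [hIcc] at hσ hτ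
  exact (List.perm_map_of_bijOn List.nodup_range' hσ hτ).map _

lemma RPerm_eq_decodingCost (K : ℕ) (w c : ℕ → ℝ) (σ : ℕ → ℕ) :
    RPerm K w c σ = decodingCost (decodingList K w c σ) -
      w (σ 0) * ((decodingList K w c σ).map Prod.snd).prod := by
  set E : ℕ → ℝ := fun t => ∏ k ∈ Ico t (K + 1), Real.exp (c (σ k))
  have hterm : ∀ t ∈ Ico 1 (K + 1),
      w (σ t) * (E t - E (t + 1)) = w (σ t) * (Real.exp (c (σ t)) - 1) * E (t + 1) := by
    intro t ht
    simp only [E]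
    rw [prod_eq_prod_Ico_succ_bot (mem_Ico.1 ht).2]
    ring
  have hlast : E (K + 1) = 1 := by simp [E]
  rw [RPerm, decodingList, List.map_map, decodingCost_map_range', List.map_map,
    List.prod_map_range', add_comm 1 K]
  simp only [← Ico_add_one_right_eq_Icc, Real.exp_sum]
  rw [sum_Ico_sub_mul_eq_sum_mul_sub (fun t => w (σ t)) E, sum_congr rfl hterm, hlast]
  simp only [Function.comp_apply, E]
  ring

theorem stmt3_general (K : ℕ) (w : ℕ → ℝ)
    (σ σs : ℕ → ℕ) (hσ0 : σ 0 = 0) (hσs0 : σs 0 = 0)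
    (hσ : Set.BijOn σ (Set.Icc 1 K) (Set.Icc 1 K))
    (hσs : Set.BijOn σs (Set.Icc 1 K) (Set.Icc 1 K))
    (hsort : ∀ s t : ℕ, 1 ≤ s → s ≤ t → t ≤ K → w (σs s) ≤ w (σs t)) :
    (∀ c : ℕ → ℝ, (∀ j, 0 ≤ c j) → RPerm K w c σs ≤ RPerm K w c σ) ∧
    ∀ p : ℝ, {c : ℕ → ℝ | (∀ j, 0 ≤ c j) ∧ RPerm K w c σ ≤ p} ⊆
      {c : ℕ → ℝ | (∀ j, 0 ≤ c j) ∧ RPerm K w c σs ≤ p} := by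
  have main (c : ℕ → ℝ) (hc : ∀ j, 0 ≤ c j) : RPerm K w c σs ≤ RPerm K w c σ := by
    have hperm := decodingList_perm_of_bijOn w c hσs hσ
    have hsorted : (decodingList K w c σs).Pairwise (fun p q => p.1 ≤ q.1) := by
      simp only [decodingList, List.pairwise_map]
      refine (List.pairwise_lt_range' (s := 1) (n := K)).imp_of_mem fun ha hb hab => ?_
      rw [List.mem_range'_1] at ha hb
      exact hsort _ _ ha.1 hab.le (by omega)
    have hexp : ∀ q ∈ decodingList K w c σ, 1 ≤ q.2 := by
      simp only [decodingList, List.mem_map]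
      rintro _ ⟨j, -, rfl⟩
      exact Real.one_le_exp (hc j)
    rw [RPerm_eq_decodingCost, RPerm_eq_decodingCost, hσ0, hσs0, (hperm.map Prod.snd).prod_eq]
    exact sub_le_sub_right (decodingCost_le_of_perm_of_pairwise hperm hsorted hexp) _
  exact ⟨main, fun p c hc => ⟨hc.1, (main c hc.1).trans hc.2⟩⟩

theorem stmt3 (K : ℕ) (hK : 2 ≤ K) (w : ℕ → ℝ) (hw0 : w 0 = 0) (hw : ∀ j, 0 ≤ w j)
    (σ σs : ℕ → ℕ) (hσ0 : σ 0 = 0) (hσs0 : σs 0 = 0)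
    (hσ : Set.BijOn σ (Set.Icc 1 K) (Set.Icc 1 K))
    (hσs : Set.BijOn σs (Set.Icc 1 K) (Set.Icc 1 K))
    (hsort : ∀ s t : ℕ, 1 ≤ s → s ≤ t → t ≤ K → w (σs s) ≤ w (σs t)) :
    (∀ c : ℕ → ℝ, (∀ j, 0 ≤ c j) → RPerm K w c σs ≤ RPerm K w c σ) ∧
    ∀ p : ℝ, {c : ℕ → ℝ | (∀ j, 0 ≤ c j) ∧ RPerm K w c σ ≤ p} ⊆
      {c : ℕ → ℝ | (∀ j, 0 ≤ c j) ∧ RPerm K w c σs ≤ p} :=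
  stmt3_general K w σ σs hσ0 hσs0 hσ hσs hsort
end

section
/- For q > 0, the function w ↦ 1 / log(1 + q/w) is strictly concave on (0, ∞). -/
/-!
With `L w = log (1 + q / w)`, the derivative of `1 / L` is `q / (w (w + q) L²)`, so strict
concavity amounts to `w (w + q) L²` being strictly increasing. Its derivative factors as
`L ((2w + q) L - 2q)`, which is positive by the logarithmic bound `log (1 + x) > 2x / (x + 2)`.
-/

open Real Set

section

variable {q w : ℝ}

lemma hasDerivAt_log_one_add_div (hw : w ≠ 0) (hwq : w + q ≠ 0) :
    HasDerivAt (fun x => log (1 + q / x)) (-q / (w * (w + q))) w := by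
  have hinner : HasDerivAt (fun x => 1 + q / x) (-q / w ^ 2) w := by
    simpa [div_eq_mul_inv, neg_div] using ((hasDerivAt_inv hw).const_mul q).const_add 1
  have hne : 1 + q / w ≠ 0 := by
    rw [one_add_div hw]; exact div_ne_zero hwq hw
  refine (hinner.log hne).congr_deriv ?_
  field_simp

lemma hasDerivAt_one_div_log_one_add_div (hw : w ≠ 0) (hwq : w + q ≠ 0)
    (hL : log (1 + q / w) ≠ 0) :
    HasDerivAt (fun x => 1 / log (1 + q / x)) (q / (w * (w + q) * log (1 + q / w) ^ 2)) w := by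
  refine ((hasDerivAt_const w (1 : ℝ)).div (hasDerivAt_log_one_add_div hw hwq) hL).congr_deriv ?_
  field_simp
  ring

lemma log_one_add_div_pos (hq : 0 < q) (hw : 0 < w) : 0 < log (1 + q / w) :=
  log_pos (lt_add_of_pos_right 1 (div_pos hq hw))

lemma two_mul_lt_mul_log_one_add_div (hq : 0 < q) (hw : 0 < w) :
    2 * q < (2 * w + q) * log (1 + q / w) := by
  have h := lt_log_one_add_of_pos (div_pos hq hw)
  rw [div_lt_iff₀ (by positivity)] at h
  calc 2 * q = 2 * (q / w) * w := by field_simp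
    _ < log (1 + q / w) * (q / w + 2) * w := mul_lt_mul_of_pos_right h hw
    _ = (2 * w + q) * log (1 + q / w) := by field_simp; ring

lemma strictMonoOn_mul_mul_log_one_add_div_sq (hq : 0 < q) :
    StrictMonoOn (fun w => w * (w + q) * log (1 + q / w) ^ 2) (Ioi 0) := by
  have hderiv : ∀ w ∈ Ioi (0 : ℝ), HasDerivAt (fun w => w * (w + q) * log (1 + q / w) ^ 2)
      (log (1 + q / w) * ((2 * w + q) * log (1 + q / w) - 2 * q)) w := by
    intro w hw
    have hw : (0 : ℝ) < w := hw
    refine (((hasDerivAt_id' w).mul ((hasDerivAt_id' w).add_const q)).mul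
      ((hasDerivAt_log_one_add_div hw.ne' (by positivity)).pow 2)).congr_deriv ?_
    simp only [Pi.mul_apply, Pi.pow_apply]
    field_simp
    ring
  refine strictMonoOn_of_deriv_pos (convex_Ioi 0)
    (fun w hw => (hderiv w hw).continuousAt.continuousWithinAt) fun w hw => ?_
  rw [interior_Ioi] at hw
  rw [(hderiv w hw).deriv]
  exact mul_pos (log_one_add_div_pos hq hw) (sub_pos.mpr (two_mul_lt_mul_log_one_add_div hq hw))

end

theorem stmt5 (q : ℝ) (hq : 0 < q) :
    StrictConcaveOn ℝ (Set.Ioi (0 : ℝ)) (fun w => 1 / Real.log (1 + q / w)) := by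
  have hderiv : ∀ w ∈ Ioi (0 : ℝ), HasDerivAt (fun w => 1 / log (1 + q / w))
      (q / (w * (w + q) * log (1 + q / w) ^ 2)) w := fun w (hw : 0 < w) =>
    hasDerivAt_one_div_log_one_add_div hw.ne' (by positivity) (log_one_add_div_pos hq hw).ne'
  refine StrictAntiOn.strictConcaveOn_of_deriv (convex_Ioi 0)
    (fun w hw => (hderiv w hw).continuousAt.continuousWithinAt) ?_
  rw [interior_Ioi]
  intro a (ha : 0 < a) b hb hab
  rw [(hderiv a ha).deriv, (hderiv b hb).deriv]
  have hpos : 0 < a * (a + q) * log (1 + q / a) ^ 2 := by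
    have := log_one_add_div_pos hq ha
    positivity
  exact div_lt_div_of_pos_left hq hpos (strictMonoOn_mul_mul_log_one_add_div_sq hq ha hb hab)
end

section
/- If f, g : ℝ≥0^n → ℝ≥0 are standard interference functions (i.e., each satisfies monotonicity: ρ ≥ ρ' ⇒ f(ρ) ≥ f(ρ'), and scalability: α > 1 ⇒ α f(ρ) > f(α ρ)), then the pointwise minimum h(ρ) = min(f(ρ), g(ρ)) is also a standard interference function. -/
theorem stmt6 {n : ℕ} (f g : (Fin n → NNReal) → NNReal)
    (hfm : Monotone f) (hgm : Monotone g)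
    (hfs : ∀ α : NNReal, 1 < α → ∀ ρ, f (α • ρ) < α * f ρ)
    (hgs : ∀ α : NNReal, 1 < α → ∀ ρ, g (α • ρ) < α * g ρ) :
    Monotone (fun ρ => min (f ρ) (g ρ)) ∧
    ∀ α : NNReal, 1 < α → ∀ ρ, min (f (α • ρ)) (g (α • ρ)) < α * min (f ρ) (g ρ) := by
  constructor
  · intro a b hab
    exact min_le_min (hfm hab) (hgm hab)
  · intro α hα ρ
    rcases le_total (f ρ) (g ρ) with h | h
    · rw [min_eq_left h]
      exact (min_le_left _ _).trans_lt (hfs α hα ρ)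
    · rw [min_eq_right h]
      exact (min_le_right _ _).trans_lt (hgs α hα ρ)
end

section
/- Let φ : ℝ≥0^n → ℝ≥0^n be a standard interference function componentwise (monotone: ρ ≥ ρ' ⇒ φ(ρ) ≥ φ(ρ'); scalable: α > 1 ⇒ α φ(ρ) > φ(αρ) componentwise, where all components are strictly positive). Then φ has at most one fixed point: if φ(ρ) = ρ and φ(ρ') = ρ' with ρ, ρ' ≥ 0, then ρ = ρ'. -/
lemma stmt8_aux {n : ℕ} (φ : (Fin n → NNReal) → (Fin n → NNReal))
    (hmono : Monotone φ)
    (hpos : ∀ ρ i, 0 < φ ρ i)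
    (hscale : ∀ α : NNReal, 1 < α → ∀ ρ i, φ (α • ρ) i < α * φ ρ i)
    (ρ ρ' : Fin n → NNReal) (h1 : φ ρ = ρ) (h2 : φ ρ' = ρ') : ρ ≤ ρ' := by
  rcases Nat.eq_zero_or_pos n with hn | hn
  · intro i; exact absurd i.2 (by omega)
  have hρ'pos : ∀ i, 0 < ρ' i := fun i => h2 ▸ hpos ρ' i
  set α : NNReal := Finset.univ.sup (fun i => ρ i / ρ' i) with hα
  have huniv : (Finset.univ : Finset (Fin n)).Nonempty := ⟨⟨0, hn⟩, Finset.mem_univ _⟩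
  obtain ⟨j, -, hj⟩ := Finset.exists_mem_eq_sup Finset.univ huniv (fun i => ρ i / ρ' i)
  have hle : ∀ i, ρ i ≤ α * ρ' i := by
    intro i
    have h : ρ i / ρ' i ≤ α := Finset.le_sup (f := fun i => ρ i / ρ' i) (Finset.mem_univ i)
    calc ρ i = ρ i / ρ' i * ρ' i := by
            rw [div_mul_cancel₀]; exact (hρ'pos i).ne'
      _ ≤ α * ρ' i := mul_le_mul_left h _
  by_cases hα1 : α ≤ 1
  · intro i
    calc ρ i ≤ α * ρ' i := hle i
      _ ≤ 1 * ρ' i := mul_le_mul_left hα1 _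
      _ = ρ' i := one_mul _
  · push_neg at hα1
    exfalso
    have hjeq : ρ j = α * ρ' j := by
      have h : α = ρ j / ρ' j := hα ▸ hj
      rw [h, div_mul_cancel₀ _ (hρ'pos j).ne']
    have hmle : ρ ≤ α • ρ' := fun i => hle i
    have : ρ j < ρ j := by
      calc ρ j = φ ρ j := (congrFun h1 j).symm
        _ ≤ φ (α • ρ') j := hmono hmle j
        _ < α * φ ρ' j := hscale α hα1 ρ' j
        _ = α * ρ' j := by rw [h2]
        _ = ρ j := hjeq.symm
    exact lt_irrefl _ this

theorem stmt8 {n : ℕ} (φ : (Fin n → NNReal) → (Fin n → NNReal))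
    (hmono : Monotone φ)
    (hpos : ∀ ρ i, 0 < φ ρ i)
    (hscale : ∀ α : NNReal, 1 < α → ∀ ρ i, φ (α • ρ) i < α * φ ρ i)
    (ρ ρ' : Fin n → NNReal) (h1 : φ ρ = ρ) (h2 : φ ρ' = ρ') : ρ = ρ' := by
  exact le_antisymm (stmt8_aux φ hmono hpos hscale ρ ρ' h1 h2)
    (stmt8_aux φ hmono hpos hscale ρ' ρ h2 h1)
end

section
/- Let φ : ℝ≥0^n → ℝ≥0^n be a monotone standard interference function with a fixed point ρ*. Then the iteration ρ^(k+1) = φ(ρ^(k)) started from ρ^(0) = 0 produces a monotonically nondecreasing sequence that is bounded above by ρ* and converges to ρ*. -/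
/-!
The iterates `φ^[k] 0` increase (monotonicity, `0 ≤ φ 0`) and stay below `ρ*` (apply `φ^[k]` to
`0 ≤ ρ*`), so they converge to their supremum `L`, and `L ≤ φ L` by monotonicity. Conversely, for
`α > 1` finitely many coordinates force `L ≤ α • φ^[K] 0` for some `K`, and scalability gives
`φ L < α • φ^[K+1] 0 ≤ α • L`; hence `L` is a fixed point, and `L = ρ*` because fixed points are
unique: if `b ≰ a`, scale `a` by the largest ratio `α = b j / a j > 1`; then
`b j = φ b j ≤ φ (α • a) j < α * a j = b j`.
-/

open Filter Topology NNReal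

theorem NNReal.le_of_forall_one_lt_lt_mul {a b : ℝ≥0} (h : ∀ α : ℝ≥0, 1 < α → a < α * b) :
    a ≤ b := by
  have hlim : Tendsto (fun α : ℝ≥0 => α * b) (𝓝[>] 1) (𝓝 b) := by
    simpa using ((continuous_mul_const b).tendsto 1).mono_left nhdsWithin_le_nhds
  exact ge_of_tendsto hlim (eventually_nhdsWithin_of_forall fun α hα => (h α hα).le)

theorem Monotone.le_map_of_tendsto_iterate {α : Type*} [TopologicalSpace α] [Preorder α]
    [OrderClosedTopology α] {f : α → α} (hf : Monotone f) {x L : α}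
    (hx : Monotone fun k => f^[k] x) (hL : Tendsto (fun k => f^[k] x) atTop (𝓝 L)) :
    L ≤ f L := by
  refine le_of_tendsto' (hL.comp (tendsto_add_atTop_nat 1)) fun k => ?_
  rw [Function.comp_apply, Function.iterate_succ_apply']
  exact hf (hx.ge_of_tendsto hL k)

theorem eventually_le_smul_of_tendsto {ι : Type*} [Finite ι] {x : ℕ → ι → ℝ≥0} {L : ι → ℝ≥0}
    (hL : Tendsto x atTop (𝓝 L)) {α : ℝ≥0} (hα : 1 < α) : ∀ᶠ k in atTop, L ≤ α • x k := by
  refine eventually_all.2 fun i => ?_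
  rcases (zero_le : 0 ≤ L i).eq_or_lt with hLi | hLi
  · exact Eventually.of_forall fun k => hLi ▸ zero_le
  · have hlim : Tendsto (fun k => α * x k i) atTop (𝓝 (α * L i)) :=
      ((continuous_apply i).tendsto L |>.comp hL).const_mul α
    exact (hlim.eventually_const_lt (lt_mul_left hLi hα)).mono fun k hk => hk.le

def Scalable {ι : Type*} (φ : (ι → ℝ≥0) → (ι → ℝ≥0)) : Prop :=
  ∀ α : ℝ≥0, 1 < α → ∀ ρ i, φ (α • ρ) i < α * φ ρ i

namespace Scalable

variable {ι : Type*} {φ : (ι → ℝ≥0) → (ι → ℝ≥0)}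

theorem pos (hφ : Scalable φ) (ρ : ι → ℝ≥0) (i : ι) : 0 < φ ρ i :=
  pos_of_mul_pos_right ((zero_le).trans_lt (hφ 2 one_lt_two ρ i)) (zero_le)

theorem map_lt_of_le_smul (hφ : Scalable φ) (hmono : Monotone φ) {α : ℝ≥0} (hα : 1 < α)
    {a b : ι → ℝ≥0} (hab : b ≤ α • a) (i : ι) : φ b i < α * φ a i :=
  (hmono hab i).trans_lt (hφ α hα a i)

theorem map_le_of_tendsto_iterate [Finite ι] (hφ : Scalable φ) (hmono : Monotone φ)
    {x L : ι → ℝ≥0} (hx : Monotone fun k => φ^[k] x)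
    (hL : Tendsto (fun k => φ^[k] x) atTop (𝓝 L)) : φ L ≤ L := by
  refine fun i => NNReal.le_of_forall_one_lt_lt_mul fun α hα => ?_
  obtain ⟨K, hK⟩ := (eventually_le_smul_of_tendsto hL hα).exists
  calc φ L i < α * φ (φ^[K] x) i := hφ.map_lt_of_le_smul hmono hα hK i
    _ = α * φ^[K + 1] x i := by rw [Function.iterate_succ_apply']
    _ ≤ α * L i := mul_le_mul_right (hx.ge_of_tendsto hL (K + 1) i) α

theorem le_of_isFixedPt [Finite ι] (hφ : Scalable φ) (hmono : Monotone φ) {a b : ι → ℝ≥0}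
    (ha : φ a = a) (hb : φ b = b) : b ≤ a := by
  by_contra hba
  obtain ⟨i, hi⟩ : ∃ i, a i < b i := by simpa [Pi.le_def] using hba
  have : Nonempty ι := ⟨i⟩
  have ha_pos : ∀ k, 0 < a k := fun k => ha ▸ hφ.pos a k
  obtain ⟨j, hj⟩ := Finite.exists_max fun k => b k / a k
  have hα : 1 < b j / a j := ((one_lt_div (ha_pos i)).2 hi).trans_le (hj i)
  have hb_le_smul : b ≤ (b j / a j) • a := fun k => by
    simpa [div_mul_cancel₀ _ (ha_pos k).ne'] using mul_le_mul_left (hj k) (a k)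
  have := hφ.map_lt_of_le_smul hmono hα hb_le_smul j
  rw [ha, hb, div_mul_cancel₀ _ (ha_pos j).ne'] at this
  exact this.false

end Scalable

theorem stmt9_general {n : ℕ} (φ : (Fin n → NNReal) → (Fin n → NNReal))
    (hmono : Monotone φ)
    (hscale : ∀ α : NNReal, 1 < α → ∀ ρ i, φ (α • ρ) i < α * φ ρ i)
    (ρs : Fin n → NNReal) (hfix : φ ρs = ρs) :
    Monotone (fun k : ℕ => φ^[k] 0) ∧ (∀ k : ℕ, φ^[k] 0 ≤ ρs) ∧
    Filter.Tendsto (fun k : ℕ => φ^[k] 0) Filter.atTop (nhds ρs) := by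
  have hφ : Scalable φ := hscale
  have hinc : Monotone fun k => φ^[k] 0 := hmono.monotone_iterate_of_le_map fun i => zero_le
  have hbdd : ∀ k, φ^[k] 0 ≤ ρs := fun k =>
    (hmono.iterate k fun i => zero_le).trans_eq (Function.IsFixedPt.iterate hfix k)
  set L := ⨆ k, φ^[k] 0
  have hL : Tendsto (fun k => φ^[k] 0) atTop (𝓝 L) := 
    tendsto_atTop_ciSup hinc ⟨ρs, Set.forall_mem_range.2 hbdd⟩
  have hLfix : φ L = L := le_antisymm (hφ.map_le_of_tendsto_iterate hmono hinc hL)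
    (hmono.le_map_of_tendsto_iterate hinc hL)
  have hLρ : L = ρs := le_antisymm (le_of_tendsto' hL hbdd) (hφ.le_of_isFixedPt hmono hLfix hfix)
  exact ⟨hinc, hbdd, hLρ ▸ hL⟩

theorem stmt9 {n : ℕ} (φ : (Fin n → NNReal) → (Fin n → NNReal))
    (hmono : Monotone φ)
    (hpos : ∀ ρ i, 0 < φ ρ i)
    (hscale : ∀ α : NNReal, 1 < α → ∀ ρ i, φ (α • ρ) i < α * φ ρ i)
    (ρs : Fin n → NNReal) (hfix : φ ρs = ρs) :
    Monotone (fun k : ℕ => φ^[k] 0) ∧ (∀ k : ℕ, φ^[k] 0 ≤ ρs) ∧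
    Filter.Tendsto (fun k : ℕ => φ^[k] 0) Filter.atTop (nhds ρs) :=
  stmt9_general φ hmono hscale ρs hfix
end

section
/- Let φ : ℝ≥0^n → ℝ≥0^n be a standard interference function (monotone and scalable with strictly positive values) with fixed point ρ*. For any starting point ρ^(0) ≥ ρ* with ρ^(0) = α ρ* for some α > 1, the iterates ρ^(k+1) = φ(ρ^(k)) form a nonincreasing sequence bounded below by ρ*, hence converge to ρ*. -/
/-!
The iterates from `α • ρ*` decrease, since scalability gives `φ (α • ρ*) ≤ α • ρ*`, and stay above
`ρ*` by monotonicity, so they converge to their infimum `L ≥ ρ*`. Scalability makes `φ` upper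
semicontinuous at positive points, hence `L ≤ φ L`. Finally a comparison principle: if `x ≤ φ x`
and `φ y ≤ y` with `y > 0`, look at the largest ratio `β = x j / y j`; were `β > 1`, then
`x j ≤ φ (β • y) j < β * y j = x j`. So `L ≤ ρ*`.
-/

open Filter Topology

theorem Monotone.le_iterate_of_isFixedPt {α : Type*} [Preorder α] {f : α → α} (hf : Monotone f)
    {a x : α} (ha : Function.IsFixedPt f a) (hax : a ≤ x) (k : ℕ) : a ≤ f^[k] x :=
  (ha.iterate k).symm.trans_le (hf.iterate k hax)

section Scalable

variable {ι : Type*} {φ : (ι → NNReal) → ι → NNReal}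

def IsScalable (φ : (ι → NNReal) → ι → NNReal) : Prop :=
  ∀ α : NNReal, 1 < α → ∀ ρ i, φ (α • ρ) i < α * φ ρ i

theorem IsScalable.le_of_le_map_of_map_le [Finite ι] (hscale : IsScalable φ) (hmono : Monotone φ)
    {x y : ι → NNReal} (hx : x ≤ φ x) (hy : φ y ≤ y) (hy_pos : ∀ i, 0 < y i) : x ≤ y := by
  by_contra hxy
  obtain ⟨i, hi⟩ : ∃ i, y i < x i := by simpa [Pi.le_def] using hxy
  have : Nonempty ι := ⟨i⟩
  obtain ⟨j, hj⟩ := Finite.exists_max fun k => x k / y k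
  set β := x j / y j
  have hβ : 1 < β := ((one_lt_div (hy_pos i)).2 hi).trans_le (hj i)
  have hxβ : x ≤ β • y := fun k => (div_le_iff₀ (hy_pos k)).1 (hj k)
  have := calc
    x j ≤ φ x j := hx j
    _ ≤ φ (β • y) j := hmono hxβ j
    _ < β * φ y j := hscale β hβ y j
    _ ≤ β * y j := by gcongr; exact hy j
    _ = x j := div_mul_cancel₀ _ (hy_pos j).ne'
  exact this.false

theorem IsScalable.le_map_of_tendsto [Finite ι] (hscale : IsScalable φ) (hmono : Monotone φ)
    {β : Type*} {l : Filter β} [l.NeBot] {x : β → ι → NNReal} {L y : ι → NNReal}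
    (hx : Tendsto x l (𝓝 L)) (hL : ∀ i, 0 < L i) (hy : ∀ᶠ k in l, y ≤ φ (x k)) :
    y ≤ φ L := by
  intro i
  by_contra! hi
  obtain ⟨α, hα, hαi⟩ : ∃ α > 1, α * φ L i < y i :=
    ((continuous_mul_const (φ L i)).tendsto 1).eventually_lt_const (by simpa using hi) |>.exists_gt
  have hxα : ∀ᶠ k in l, x k ≤ α • L := by
    filter_upwards [eventually_all.2 fun j => (tendsto_pi_nhds.1 hx j).eventually_lt_const
      (lt_mul_of_one_lt_left (hL j) hα)] with k hk j using (hk j).le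
  obtain ⟨k, hyk, hxk⟩ := (hy.and hxα).exists
  have := calc
    y i ≤ φ (x k) i := hyk i
    _ ≤ φ (α • L) i := hmono hxk i
    _ < α * φ L i := hscale α hα L i
    _ < y i := hαi
  exact this.false

theorem IsScalable.tendsto_iterate [Finite ι] (hscale : IsScalable φ) (hmono : Monotone φ)
    {ρs x : ι → NNReal} (hfix : φ ρs = ρs) (hpos : ∀ i, 0 < ρs i) (hρx : ρs ≤ x) (hx : φ x ≤ x) :
    Tendsto (fun k => φ^[k] x) atTop (𝓝 ρs) := by
  have hlow := hmono.le_iterate_of_isFixedPt hfix hρx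
  have hbdd : BddBelow (Set.range fun k => φ^[k] x) := ⟨ρs, Set.forall_mem_range.2 hlow⟩
  have hlim := tendsto_atTop_ciInf (hmono.antitone_iterate_of_map_le hx) hbdd
  set L := ⨅ k, φ^[k] x
  have hρL : ρs ≤ L := le_ciInf hlow
  have hL : L ≤ φ L := hscale.le_map_of_tendsto hmono hlim (fun i => (hpos i).trans_le (hρL i))
    (Eventually.of_forall fun k => by
      simpa only [Function.iterate_succ_apply'] using ciInf_le hbdd (k + 1))
  rwa [le_antisymm (hscale.le_of_le_map_of_map_le hmono hL hfix.le hpos) hρL] at hlim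

end Scalable

theorem stmt10 {n : ℕ} (φ : (Fin n → NNReal) → (Fin n → NNReal))
    (hmono : Monotone φ)
    (hpos : ∀ ρ i, 0 < φ ρ i)
    (hscale : ∀ α : NNReal, 1 < α → ∀ ρ i, φ (α • ρ) i < α * φ ρ i)
    (ρs : Fin n → NNReal) (hfix : φ ρs = ρs)
    (α : NNReal) (hα : 1 < α) :
    Antitone (fun k : ℕ => φ^[k] (α • ρs)) ∧ (∀ k : ℕ, ρs ≤ φ^[k] (α • ρs)) ∧
    Filter.Tendsto (fun k : ℕ => φ^[k] (α • ρs)) Filter.atTop (nhds ρs) := by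
  have hρs_pos : ∀ i, 0 < ρs i := fun i => hfix ▸ hpos ρs i
  have hρs_le : ρs ≤ α • ρs := le_smul_of_one_le_left zero_le hα.le
  have hmap_le : φ (α • ρs) ≤ α • ρs := fun i => by
    simpa only [hfix, Pi.smul_apply, smul_eq_mul] using (hscale α hα ρs i).le
  exact ⟨hmono.antitone_iterate_of_map_le hmap_le, hmono.le_iterate_of_isFixedPt hfix hρs_le,
    IsScalable.tendsto_iterate hscale hmono hfix hρs_pos hρs_le hmap_le⟩
end

section
/- For K = 2 users with interference-plus-noise values w_1 ≤ w_2 and rates c_1, c_2 ≥ 0, the power required under the correct decoding order (user 1 decoded without intra-cell interference, user 2 interfered by user 1) is R* = w_1 e^{c_1 + c_2} + (w_2 − w_1) e^{c_2} − w_2, while under the reversed order it is R = w_2 e^{c_1 + c_2} + (w_1 − w_2) e^{c_1} − w_1. Then R* ≤ R, with equality iff w_1 = w_2 or c_1 = 0 or c_2 = 0. -/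
theorem stmt11 (w1 w2 c1 c2 : ℝ) (hw1 : 0 ≤ w1) (hw : w1 ≤ w2) (hc1 : 0 ≤ c1) (hc2 : 0 ≤ c2) :
    w1 * Real.exp (c1 + c2) + (w2 - w1) * Real.exp c2 - w2 ≤
      w2 * Real.exp (c1 + c2) + (w1 - w2) * Real.exp c1 - w1 ∧
    (w1 * Real.exp (c1 + c2) + (w2 - w1) * Real.exp c2 - w2 =
        w2 * Real.exp (c1 + c2) + (w1 - w2) * Real.exp c1 - w1 ↔
      w1 = w2 ∨ c1 = 0 ∨ c2 = 0) := by
  have h1 : (1:ℝ) ≤ Real.exp c1 := Real.one_le_exp hc1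
  have h2 : (1:ℝ) ≤ Real.exp c2 := Real.one_le_exp hc2
  have hE : Real.exp (c1 + c2) = Real.exp c1 * Real.exp c2 := Real.exp_add c1 c2
  have key : w2 * Real.exp (c1 + c2) + (w1 - w2) * Real.exp c1 - w1 -
      (w1 * Real.exp (c1 + c2) + (w2 - w1) * Real.exp c2 - w2) =
      (w2 - w1) * ((Real.exp c1 - 1) * (Real.exp c2 - 1)) := by
    rw [hE]; ring
  constructor
  · nlinarith [mul_nonneg (mul_nonneg (sub_nonneg.2 hw) (sub_nonneg.2 h1)) (sub_nonneg.2 h2)]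
  · constructor
    · intro h
      have h0 : (w2 - w1) * ((Real.exp c1 - 1) * (Real.exp c2 - 1)) = 0 := by linarith [key]
      rcases mul_eq_zero.1 h0 with h | h
      · left; linarith
      · rcases mul_eq_zero.1 h with h | h
        · right; left
          have : Real.exp c1 = Real.exp 0 := by rw [Real.exp_zero]; linarith
          exact Real.exp_injective this
        · right; right
          have : Real.exp c2 = Real.exp 0 := by rw [Real.exp_zero]; linarith
          exact Real.exp_injective this
    · rintro (h | h | h) <;> subst h <;> simp [Real.exp_add] <;> ring
end

section
/- Let K ≥ 2, w : Fin K → ℝ≥0 nondecreasing, and p ≥ 0. The map from power splits to rates is a bijection onto the rate-region boundary with full power: if q : Fin K → ℝ≥0 with ∑_j q_j = p and c_j = log(1 + q_j/(∑_{h<j} q_h + w_j)) (denominators positive, i.e., w_j > 0), then R(c) = p where R(c) = ∑_{t=1}^K (w_t − w_{t−1}) e^{∑_{k=t}^K c_k} − w_K with w_0 := 0. -/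
open Finset Real

/-!
Writing `Q j = q₁ + ⋯ + q_j` and `E t = exp (c_t + ⋯ + c_K)`, the rate formula says exactly
`exp c_t * (Q_{t-1} + w_t) = Q_t + w_t`. Hence `(w_t - w_{t-1}) E_t = f (t+1) - f t` with
`f t = (Q_{t-1} + w_{t-1}) E_t`, and the sum defining `Rtot` telescopes to
`f (K+1) - f 1 = Q_K + w_K - w_0 E_1 = p + w_K`.
-/

lemma exp_sum_Icc_eq_exp_mul {t K : ℕ} (htK : t ≤ K) (c : ℕ → ℝ) :
    exp (∑ k ∈ Icc t K, c k) = exp (c t) * exp (∑ k ∈ Icc (t + 1) K, c k) := by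
  rw [Icc_eq_cons_Ioc htK, sum_cons, Icc_add_one_left_eq_Ioc, exp_add]

theorem Rtot_eq_of_exp_mul_eq (K : ℕ) (w c Q : ℕ → ℝ)
    (h : ∀ t ∈ Icc 1 K, exp (c t) * (Q (t - 1) + w t) = Q t + w t) :
    Rtot K w c = Q K - (Q 0 + w 0) * exp (∑ k ∈ Icc 1 K, c k) := by
  set f : ℕ → ℝ := fun t ↦ (Q (t - 1) + w (t - 1)) * exp (∑ k ∈ Icc t K, c k)
  have hstep : ∀ t ∈ Icc 1 K,
      (w t - w (t - 1)) * exp (∑ k ∈ Icc t K, c k) = f (t + 1) - f t := by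
    intro t ht
    have htK : t ≤ K := (mem_Icc.1 ht).2
    simp only [f, Nat.add_sub_cancel]
    rw [← h t ht, exp_sum_Icc_eq_exp_mul htK]
    ring
  have hfK : f (K + 1) = Q K + w K := by
    simp [f]
  have htelescope : ∑ t ∈ Icc 1 K, (f (t + 1) - f t) = f (K + 1) - f 1 := by
    rw [← Ico_add_one_right_eq_Icc]
    exact sum_Ico_sub f (by omega)
  rw [Rtot, sum_congr rfl hstep, htelescope, hfK]
  simp only [f, Nat.sub_self]
  ring

lemma exp_log_one_add_div_mul {x D : ℝ} (hD : 0 < D) (hx : 0 ≤ x) :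
    exp (log (1 + x / D)) * D = D + x := by
  rw [exp_log (by positivity)]
  field_simp

theorem stmt14_general (K : ℕ) (p : ℝ) (q w c : ℕ → ℝ)
    (hq : ∀ j ∈ Finset.Icc 1 K, 0 ≤ q j)
    (hsum : ∑ j ∈ Finset.Icc 1 K, q j = p)
    (hw0 : w 0 = 0) (hwpos : ∀ j ∈ Finset.Icc 1 K, 0 < w j)
    (hc : ∀ j ∈ Finset.Icc 1 K,
      c j = Real.log (1 + q j / ((∑ h ∈ Finset.Icc 1 (j - 1), q h) + w j))) :
    Rtot K w c = p := by
  set Q : ℕ → ℝ := fun j ↦ ∑ h ∈ Icc 1 j, q h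
  have hrate : ∀ t ∈ Icc 1 K, exp (c t) * (Q (t - 1) + w t) = Q t + w t := by
    intro t ht
    obtain ⟨ht1, htK⟩ := mem_Icc.1 ht
    have hQ_nonneg : 0 ≤ Q (t - 1) :=
      sum_nonneg fun h hh ↦ hq h (mem_Icc.2 ⟨(mem_Icc.1 hh).1, (mem_Icc.1 hh).2.trans (by omega)⟩)
    have hQ_succ : Q t = Q (t - 1) + q t := by
      obtain ⟨s, rfl⟩ : ∃ s, t = s + 1 := ⟨t - 1, by omega⟩
      simp only [Q, Nat.add_sub_cancel]
      exact sum_Icc_succ_top (by omega) q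
    rw [hc t ht, exp_log_one_add_div_mul (by linarith [hwpos t ht]) (hq t ht), hQ_succ]
    ring
  rw [Rtot_eq_of_exp_mul_eq K w c Q hrate]
  simp [Q, hw0, hsum]

theorem stmt14 (K : ℕ) (hK : 2 ≤ K) (p : ℝ) (hp : 0 ≤ p) (q w c : ℕ → ℝ)
    (hq : ∀ j ∈ Finset.Icc 1 K, 0 ≤ q j)
    (hsum : ∑ j ∈ Finset.Icc 1 K, q j = p)
    (hw0 : w 0 = 0) (hwpos : ∀ j ∈ Finset.Icc 1 K, 0 < w j)
    (hmono : ∀ s t : ℕ, s ≤ t → t ≤ K → w s ≤ w t)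
    (hc : ∀ j ∈ Finset.Icc 1 K,
      c j = Real.log (1 + q j / ((∑ h ∈ Finset.Icc 1 (j - 1), q h) + w j))) :
    Rtot K w c = p :=
  stmt14_general K p q w c hq hsum hw0 hwpos hc
end

section
/- For fixed q > 0 and a, σ ≥ 0 with aρ + σ > 0 for all ρ ≥ 0 (i.e., σ > 0), the function ρ ↦ log(1 + q/(aρ + σ)) is nonincreasing in ρ ≥ 0, and for any α > 1 and ρ ≥ 0, (1/α) log(1 + q/(aρ + σ)) < log(1 + q/(aαρ + σ)). -/
theorem stmt15 (q a σ : ℝ) (hq : 0 < q) (ha : 0 ≤ a) (hσ : 0 < σ) :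
    AntitoneOn (fun ρ => Real.log (1 + q / (a * ρ + σ))) (Set.Ici (0 : ℝ)) ∧
    ∀ α ρ : ℝ, 1 < α → 0 ≤ ρ →
      (1 / α) * Real.log (1 + q / (a * ρ + σ)) < Real.log (1 + q / (a * (α * ρ) + σ)) := by
  constructor
  · intro x hx y hy hxy
    simp only [Set.mem_Ici] at hx hy
    have hdx : 0 < a * x + σ := by nlinarith
    have hdy : 0 < a * y + σ := by nlinarith
    have h1 : (0:ℝ) < 1 + q / (a * y + σ) := by positivity
    apply Real.log_le_log h1
    gcongr
  · intro α ρ hα hρ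
    have hα0 : (0:ℝ) < α := by linarith
    have hd1 : 0 < a * ρ + σ := by nlinarith
    have hd2 : 0 < a * (α * ρ) + σ := by nlinarith [mul_nonneg (mul_nonneg ha hα0.le) hρ]
    set s := q / (a * (α * ρ) + σ) with hs
    have hs0 : 0 < s := by positivity
    have hbern : 1 + α * s < (1 + s) ^ α :=
      one_add_mul_self_lt_rpow_one_add (by linarith) (ne_of_gt hs0) hα
    have hle : q / (a * ρ + σ) ≤ α * s := by
      rw [hs, mul_div_assoc']
      rw [div_le_div_iff₀ hd1 hd2]
      nlinarith [mul_nonneg (mul_nonneg (by linarith : (0:ℝ) ≤ α-1) hq.le) hσ.le]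
    have h2 : Real.log (1 + q / (a * ρ + σ)) < α * Real.log (1 + s) := by
      calc Real.log (1 + q / (a * ρ + σ)) ≤ Real.log (1 + α * s) := by
            apply Real.log_le_log (by positivity) (by linarith)
        _ < Real.log ((1 + s) ^ α) :=
            Real.log_lt_log (by nlinarith) hbern
        _ = α * Real.log (1 + s) := Real.log_rpow (by linarith) α
    rw [div_mul_eq_mul_div, div_lt_iff₀ hα0, mul_comm (Real.log _) α]
    simpa using h2
end

section
/- Suppose φ : ℝ≥0^n → ℝ≥0^n is continuous, monotone, and scalable (α > 1 ⇒ αφ(ρ) > φ(αρ)), and suppose there exists z ≥ 0 with φ(z) ≤ z (a feasible point). Then φ has a fixed point ρ* with 0 ≤ ρ* ≤ z, and the iteration from ρ^(0) = 0 converges monotonically upward to ρ*. -/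
open Filter Function Topology

theorem Monotone.iterate_le_of_map_le {α : Type*} [Preorder α] {f : α → α} (hf : Monotone f)
    {x z : α} (hxz : x ≤ z) (hz : f z ≤ z) (k : ℕ) : f^[k] x ≤ z := by
  induction k with
  | zero => exact hxz
  | succ k ih => exact (iterate_succ_apply' f k x).trans_le ((hf ih).trans hz)

theorem Monotone.exists_isFixedPt_le_tendsto_iterate {α : Type*}
    [ConditionallyCompleteLattice α] [TopologicalSpace α] [SupConvergenceClass α]
    [T2Space α] {f : α → α} (hf : Monotone f) (hcont : Continuous f) {x z : α}
    (hx : x ≤ f x) (hxz : x ≤ z) (hz : f z ≤ z) :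
    ∃ y, IsFixedPt f y ∧ y ≤ z ∧ Tendsto (fun k ↦ f^[k] x) atTop (𝓝 y) := by
  have hbdd : BddAbove (Set.range fun k ↦ f^[k] x) :=
    ⟨z, Set.forall_mem_range.2 (hf.iterate_le_of_map_le hxz hz)⟩
  have hlim := tendsto_atTop_ciSup (hf.monotone_iterate_of_le_map hx) hbdd
  exact ⟨_, isFixedPt_of_tendsto_iterate hlim hcont.continuousAt,
    ciSup_le (hf.iterate_le_of_map_le hxz hz), hlim⟩

theorem stmt17_general {n : ℕ} (φ : (Fin n → NNReal) → (Fin n → NNReal))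
    (hcont : Continuous φ) (hmono : Monotone φ)
    (z : Fin n → NNReal) (hz : φ z ≤ z) :
    ∃ ρs : Fin n → NNReal, φ ρs = ρs ∧ ρs ≤ z ∧
      Monotone (fun k : ℕ => φ^[k] 0) ∧
      Filter.Tendsto (fun k : ℕ => φ^[k] 0) Filter.atTop (nhds ρs) := by
  obtain ⟨ρs, hfix, hle, hlim⟩ :=
    hmono.exists_isFixedPt_le_tendsto_iterate hcont zero_le zero_le hz
  exact ⟨ρs, hfix, hle, hmono.monotone_iterate_of_le_map zero_le, hlim⟩

theorem stmt17 {n : ℕ} (φ : (Fin n → NNReal) → (Fin n → NNReal))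
    (hcont : Continuous φ) (hmono : Monotone φ)
    (hscale : ∀ α : NNReal, 1 < α → ∀ ρ i, φ (α • ρ) i < α * φ ρ i)
    (z : Fin n → NNReal) (hz : φ z ≤ z) :
    ∃ ρs : Fin n → NNReal, φ ρs = ρs ∧ ρs ≤ z ∧
      Monotone (fun k : ℕ => φ^[k] 0) ∧
      Filter.Tendsto (fun k : ℕ => φ^[k] 0) Filter.atTop (nhds ρs) :=
  stmt17_general φ hcont hmono z hz
end

section
/- Let K ≥ 2, rates c : Fin K → ℝ with c_j > 0 for all j, and w : Fin K → ℝ≥0. If a permutation σ minimizes R_σ(c) = ∑_{t=1}^K (w_{σ(t)} − w_{σ(t−1)}) e^{∑_{k=t}^K c_{σ(k)}} − w_{σ(K)} (w_{σ(0)} := 0) over all permutations, and all w values are distinct, then σ orders the users in strictly increasing w: w_{σ(1)} < w_{σ(2)} < ... < w_{σ(K)}. -/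
/-!
Summation by parts turns `R_σ` into `∑ₜ w_{σ(t)} (E_t − E_{t+1})` with `E_t = e^{∑_{k ≥ t} c_{σ(k)}}`.
Exchanging the users at adjacent positions `s, s+1` leaves every `E_t` but `E_{s+1}` unchanged,
so the change of `R` is `(w_{σ(s+1)} − w_{σ(s)}) e^{∑_{k ≥ s+2} c_{σ(k)}} (e^{c_{σ(s)}} − 1)(e^{c_{σ(s+1)}} − 1)`,
whose last three factors are positive. Minimality of `σ` therefore forces `w` to increase along
adjacent positions, strictly because the weights are distinct.
-/

open Finset

theorem sum_Icc_sub_mul_eq_sum_mul_sub (f g : ℕ → ℝ) (K : ℕ) :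
    ∑ t ∈ Icc 1 K, (f t - f (t - 1)) * g t
      = ∑ t ∈ Icc 1 K, f t * (g t - g (t + 1)) + f K * g (K + 1) - f 0 * g 1 := by
  induction K with
  | zero => simp
  | succ K ih =>
    rw [sum_Icc_succ_top (by omega), sum_Icc_succ_top (by omega), ih, Nat.add_sub_cancel]
    ring

noncomputable def tailExp (K : ℕ) (c : ℕ → ℝ) (σ : ℕ → ℕ) (t : ℕ) : ℝ :=
  Real.exp (∑ k ∈ Icc t K, c (σ k))

theorem tailExp_succ_right (K : ℕ) (c : ℕ → ℝ) (σ : ℕ → ℕ) : tailExp K c σ (K + 1) = 1 := by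
  simp [tailExp]

theorem tailExp_eq_exp_mul {K t : ℕ} (c : ℕ → ℝ) (σ : ℕ → ℕ) (ht : t ≤ K) :
    tailExp K c σ t = Real.exp (c (σ t)) * tailExp K c σ (t + 1) := by
  rw [tailExp, tailExp, ← Real.exp_add, ← insert_Icc_add_one_left_eq_Icc ht, sum_insert (by simp)]

theorem RPerm_eq_sum_tailExp (K : ℕ) (w c : ℕ → ℝ) (σ : ℕ → ℕ) :
    RPerm K w c σ = ∑ t ∈ Icc 1 K, w (σ t) * (tailExp K c σ t - tailExp K c σ (t + 1))
      - w (σ 0) * tailExp K c σ 1 := by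
  change (∑ t ∈ Icc 1 K, (w (σ t) - w (σ (t - 1))) * tailExp K c σ t) - w (σ K) = _
  rw [sum_Icc_sub_mul_eq_sum_mul_sub (fun t => w (σ t)), tailExp_succ_right]
  ring

theorem tailExp_comp_swap {K s t : ℕ} (c : ℕ → ℝ) (σ : ℕ → ℕ) (hsK : s + 1 ≤ K)
    (ht : t ≠ s + 1) : tailExp K c (σ ∘ Equiv.swap s (s + 1)) t = tailExp K c σ t := by
  unfold tailExp
  congr 1
  rcases le_or_gt t s with hts | hst
  · refine Equiv.Perm.sum_comp _ _ (fun k => c (σ k)) fun k hk => ?_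
    have hk' : k = s ∨ k = s + 1 := by
      by_contra! h
      exact hk (Equiv.swap_apply_of_ne_of_ne h.1 h.2)
    simp only [coe_Icc, Set.mem_Icc]
    omega
  · refine sum_congr rfl fun k hk => ?_
    rw [mem_Icc] at hk
    rw [Function.comp_apply, Equiv.swap_apply_of_ne_of_ne (by omega) (by omega)]

theorem bijOn_swap_Icc {K s : ℕ} (hs : 1 ≤ s) (hsK : s + 1 ≤ K) :
    Set.BijOn (Equiv.swap s (s + 1)) (Set.Icc 1 K) (Set.Icc 1 K) := by
  have hmaps : Set.MapsTo (Equiv.swap s (s + 1)) (Set.Icc 1 K) (Set.Icc 1 K) := by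
    intro k hk
    simp only [Set.mem_Icc, Equiv.swap_apply_def] at hk ⊢
    split_ifs <;> omega
  exact ⟨hmaps, (Equiv.injective _).injOn, fun k hk => ⟨_, hmaps hk, Equiv.swap_apply_self _ _ _⟩⟩

theorem RPerm_comp_swap_sub {K s : ℕ} (w c : ℕ → ℝ) (σ : ℕ → ℕ) (hs : 1 ≤ s) (hsK : s + 1 ≤ K) :
    RPerm K w c (σ ∘ Equiv.swap s (s + 1)) - RPerm K w c σ
      = (w (σ (s + 1)) - w (σ s)) * tailExp K c σ (s + 2)
          * (Real.exp (c (σ s)) - 1) * (Real.exp (c (σ (s + 1))) - 1) := by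
  set τ := σ ∘ Equiv.swap s (s + 1)
  have hτ : ∀ t, t ≠ s → t ≠ s + 1 → τ t = σ t := fun t h₁ h₂ => by
    simp only [τ, Function.comp_apply, Equiv.swap_apply_of_ne_of_ne h₁ h₂]
  have hE : ∀ t, t ≠ s + 1 → tailExp K c τ t = tailExp K c σ t := fun t ht =>
    tailExp_comp_swap c σ hsK ht
  have hterm : ∀ t ∈ Icc 1 K, t ≠ s ∧ t ≠ s + 1 →
      w (τ t) * (tailExp K c τ t - tailExp K c τ (t + 1))
        - w (σ t) * (tailExp K c σ t - tailExp K c σ (t + 1)) = 0 := fun t _ ht => by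
    rw [hτ t ht.1 ht.2, hE t ht.2, hE (t + 1) (by omega), sub_self]
  rw [RPerm_eq_sum_tailExp, RPerm_eq_sum_tailExp, hτ 0 (by omega) (by omega), hE 1 (by omega),
    sub_sub_sub_cancel_right, ← sum_sub_distrib,
    sum_eq_add s (s + 1) (by omega) hterm
      (absurd (mem_Icc.2 ⟨hs, by omega⟩)) (absurd (mem_Icc.2 ⟨by omega, hsK⟩))]
  have hτs : τ s = σ (s + 1) := by simp [τ]
  have hτs' : τ (s + 1) = σ s := by simp [τ]
  have hE₂ : tailExp K c τ (s + 1 + 1) = tailExp K c σ (s + 2) := hE _ (by omega)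
  have hEτ₁ : tailExp K c τ (s + 1) = Real.exp (c (σ s)) * tailExp K c σ (s + 2) := by
    rw [tailExp_eq_exp_mul c τ hsK, hτs', hE₂]
  have hEσ₁ : tailExp K c σ (s + 1) = Real.exp (c (σ (s + 1))) * tailExp K c σ (s + 2) :=
    tailExp_eq_exp_mul c σ hsK
  have hEσ₀ : tailExp K c σ s = Real.exp (c (σ s)) * tailExp K c σ (s + 1) :=
    tailExp_eq_exp_mul c σ (by omega)
  rw [hτs, hτs', hE s (by omega), hEσ₀, hEτ₁, hEσ₁, hE₂]
  ring

theorem le_of_RPerm_le_comp_swap {K s : ℕ} (w c : ℕ → ℝ) (σ : ℕ → ℕ) (hs : 1 ≤ s)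
    (hsK : s + 1 ≤ K) (hcs : 0 < c (σ s)) (hcs' : 0 < c (σ (s + 1)))
    (hle : RPerm K w c σ ≤ RPerm K w c (σ ∘ Equiv.swap s (s + 1))) :
    w (σ s) ≤ w (σ (s + 1)) := by
  have hfactor : 0 < tailExp K c σ (s + 2) * (Real.exp (c (σ s)) - 1)
      * (Real.exp (c (σ (s + 1))) - 1) :=
    mul_pos (mul_pos (Real.exp_pos _) (sub_pos.2 (Real.one_lt_exp_iff.2 hcs)))
      (sub_pos.2 (Real.one_lt_exp_iff.2 hcs'))
  have hdiff := RPerm_comp_swap_sub w c σ hs hsK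
  refine sub_nonneg.1 (nonneg_of_mul_nonneg_left ?_ hfactor)
  rw [← mul_assoc, ← mul_assoc, ← hdiff]
  linarith

theorem stmt18_general (K : ℕ) (c w : ℕ → ℝ)
    (hc : ∀ j ∈ Finset.Icc 1 K, 0 < c j)
    (hdistinct : ∀ i ∈ Finset.Icc 1 K, ∀ j ∈ Finset.Icc 1 K, i ≠ j → w i ≠ w j)
    (σ : ℕ → ℕ) (hσ0 : σ 0 = 0) (hσ : Set.BijOn σ (Set.Icc 1 K) (Set.Icc 1 K))
    (hmin : ∀ σ' : ℕ → ℕ, σ' 0 = 0 → Set.BijOn σ' (Set.Icc 1 K) (Set.Icc 1 K) →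
      RPerm K w c σ ≤ RPerm K w c σ') :
    ∀ s t : ℕ, 1 ≤ s → s < t → t ≤ K → w (σ s) < w (σ t) := by
  have hmem : ∀ k, 1 ≤ k → k ≤ K → σ k ∈ Icc 1 K := fun k h₁ h₂ =>
    mem_Icc.2 (hσ.mapsTo ⟨h₁, h₂⟩)
  have hadj : ∀ s, 1 ≤ s → s + 1 ≤ K → w (σ s) < w (σ (s + 1)) := by
    intro s hs hsK
    have hswap0 : (σ ∘ Equiv.swap s (s + 1)) 0 = 0 := by
      rw [Function.comp_apply, Equiv.swap_apply_of_ne_of_ne (by omega) (by omega), hσ0]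
    have hne : σ s ≠ σ (s + 1) := fun h => by
      have := hσ.injOn ⟨hs, by omega⟩ ⟨by omega, hsK⟩ h
      omega
    exact lt_of_le_of_ne
      (le_of_RPerm_le_comp_swap w c σ hs hsK (hc _ (hmem s hs (by omega)))
        (hc _ (hmem (s + 1) (by omega) hsK))
        (hmin _ hswap0 (hσ.comp (bijOn_swap_Icc hs hsK))))
      (hdistinct _ (hmem s hs (by omega)) _ (hmem (s + 1) (by omega) hsK) hne)
  have hmono : StrictMonoOn (w ∘ σ) (Set.Icc 1 K) :=
    strictMonoOn_of_lt_succ Set.ordConnected_Icc fun k _ hk hk' => by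
      rw [Order.succ_eq_add_one] at hk' ⊢
      exact hadj k hk.1 hk'.2
  exact fun s t hs hst htK => hmono ⟨hs, by omega⟩ ⟨by omega, htK⟩ hst

theorem stmt18 (K : ℕ) (hK : 2 ≤ K) (c w : ℕ → ℝ)
    (hc : ∀ j ∈ Finset.Icc 1 K, 0 < c j)
    (hw0 : w 0 = 0) (hw : ∀ j, 0 ≤ w j)
    (hdistinct : ∀ i ∈ Finset.Icc 1 K, ∀ j ∈ Finset.Icc 1 K, i ≠ j → w i ≠ w j)
    (σ : ℕ → ℕ) (hσ0 : σ 0 = 0) (hσ : Set.BijOn σ (Set.Icc 1 K) (Set.Icc 1 K))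
    (hmin : ∀ σ' : ℕ → ℕ, σ' 0 = 0 → Set.BijOn σ' (Set.Icc 1 K) (Set.Icc 1 K) →
      RPerm K w c σ ≤ RPerm K w c σ') :
    ∀ s t : ℕ, 1 ≤ s → s < t → t ≤ K → w (σ s) < w (σ t) :=
  stmt18_general K c w hc hdistinct σ hσ0 hσ hmin
end
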